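/- Let T > 0, let y, h ∈ W^{1,1}(0,T), and let g ∈ C(ℝ) with g(y) → -∞ as y → +∞. Suppose y'(t) = g(y(t)) + h'(t) on [0,T], y(0) = y⁰, and h(t₂) - h(t₁) ≤ N₀ + N₁(t₂ - t₁) for all 0 ≤ t₁ < t₂ ≤ T, with constants N₀, N₁ ≥ 0. If ζ̃ is a constant such that g(ζ) ≤ -N₁ for all ζ ≥ ζ̃, then y(t) ≤ max{y⁰, ζ̃} + N₀ for all t ∈ [0,T]. -/

import Mathlib

/-- Zlotnik's inequality. If `y' = g(y) + h'` on `[0,T]`, `g(+∞) = -∞`,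
the increments of `h` satisfy `h(t₂) - h(t₁) ≤ N₀ + N₁(t₂ - t₁)`, and `g(ζ) ≤ -N₁` for all
`ζ ≥ ζ̃`, then `y(t) ≤ max{y(0), ζ̃} + N₀` on `[0,T]`. -/
theorem stmt4 (T : ℝ) (hT : 0 < T) (g : ℝ → ℝ) (hg : Continuous g)
    (hglim : Filter.Tendsto g Filter.atTop Filter.atBot)
    (y h : ℝ → ℝ) (N₀ N₁ : ℝ) (hN₀ : 0 ≤ N₀) (hN₁ : 0 ≤ N₁)
    (hhdiff : ∀ t ∈ Set.Icc (0 : ℝ) T, DifferentiableAt ℝ h t)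
    (hy : ∀ t ∈ Set.Icc (0 : ℝ) T, HasDerivAt y (g (y t) + deriv h t) t)
    (hinc : ∀ t₁ t₂ : ℝ, 0 ≤ t₁ → t₁ < t₂ → t₂ ≤ T → h t₂ - h t₁ ≤ N₀ + N₁ * (t₂ - t₁))
    (ζ : ℝ) (hζ : ∀ z, ζ ≤ z → g z ≤ -N₁) :
    ∀ t ∈ Set.Icc (0 : ℝ) T, y t ≤ max (y 0) ζ + N₀ := by
  intro t ht
  by_contra hcon
  push_neg at hcon
  set M := max (y 0) ζ with hM
  obtain ⟨ht0, htT⟩ := ht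
  have hy0 : y 0 ≤ M := le_max_left _ _
  have hζM : ζ ≤ M := le_max_right _ _
  set S : Set ℝ := {s | s ∈ Set.Icc 0 t ∧ y s ≤ M} with hS
  have h0S : (0:ℝ) ∈ S := ⟨⟨le_refl 0, ht0⟩, hy0⟩
  have hSne : S.Nonempty := ⟨0, h0S⟩
  have hSbdd : BddAbove S := ⟨t, fun s hs => hs.1.2⟩
  set t₁ := sSup S with ht₁
  have ht₁0 : 0 ≤ t₁ := le_csSup hSbdd h0S
  have ht₁t : t₁ ≤ t := csSup_le hSne (fun s hs => hs.1.2)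
  have ht₁Icc : t₁ ∈ Set.Icc (0:ℝ) T := ⟨ht₁0, ht₁t.trans htT⟩
  -- y t₁ ≤ M
  have hyt₁ : y t₁ ≤ M := by
    by_contra hgt
    push_neg at hgt
    have hcont : ContinuousAt y t₁ := (hy t₁ ht₁Icc).continuousAt
    have hev : ∀ᶠ s in nhds t₁, y s ∈ Set.Ioi M := hcont.eventually_mem (Ioi_mem_nhds hgt)
    rw [Metric.eventually_nhds_iff] at hev
    obtain ⟨δ, hδ, hball⟩ := hev
    obtain ⟨s, hsS, hslt⟩ := exists_lt_of_lt_csSup hSne (show t₁ - δ < t₁ by linarith)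
    have hst₁ : s ≤ t₁ := le_csSup hSbdd hsS
    have : y s ∈ Set.Ioi M := hball (by rw [Real.dist_eq]; rw [abs_lt]; constructor <;> linarith)
    exact absurd hsS.2 (not_le.mpr this)
  -- t₁ < t
  have ht₁lt : t₁ < t := by
    rcases lt_or_eq_of_le ht₁t with h' | h'
    · exact h'
    · exfalso; rw [h'] at hyt₁; linarith
  -- points in (t₁, t] have y > M
  have hMlt : ∀ s, t₁ < s → s ≤ t → M < y s := by
    intro s h1 h2
    by_contra hle
    push_neg at hle
    have : s ∈ S := ⟨⟨le_trans ht₁0 h1.le, h2⟩, hle⟩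
    exact absurd (le_csSup hSbdd this) (not_le.mpr h1)
  -- derivative of ψ
  set ψ : ℝ → ℝ := fun s => y s - h s + N₁ * s with hψ
  have hasψ : ∀ s ∈ Set.Icc (0:ℝ) T, HasDerivAt ψ (g (y s) + N₁) s := by
    intro s hs
    have h1 := hy s hs
    have h2 := (hhdiff s hs).hasDerivAt
    have h3 : HasDerivAt (fun x : ℝ => N₁ * x) N₁ s := by
      simpa using (hasDerivAt_id s).const_mul N₁
    have := (h1.sub h2).add h3
    exact this.congr_deriv (by ring)
  have hsub : Set.Icc t₁ t ⊆ Set.Icc (0:ℝ) T := fun s hs =>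
    ⟨le_trans ht₁0 hs.1, le_trans hs.2 htT⟩
  have anti : AntitoneOn ψ (Set.Icc t₁ t) := by
    apply antitoneOn_of_deriv_nonpos (convex_Icc t₁ t)
    · exact fun s hs => ((hasψ s (hsub hs)).continuousAt).continuousWithinAt
    · rw [interior_Icc]
      exact fun s hs => ((hasψ s (hsub ⟨hs.1.le, hs.2.le⟩)).differentiableAt).differentiableWithinAt
    · rw [interior_Icc]
      intro s hs
      rw [(hasψ s (hsub ⟨hs.1.le, hs.2.le⟩)).deriv]
      have : ζ ≤ y s := le_trans hζM (hMlt s hs.1 hs.2.le).le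
      have := hζ _ this
      linarith
  have hψle : ψ t ≤ ψ t₁ :=
    anti ⟨le_refl t₁, ht₁lt.le⟩ ⟨ht₁lt.le, le_refl t⟩ ht₁lt.le
  have hhle : h t - h t₁ ≤ N₀ + N₁ * (t - t₁) := hinc t₁ t ht₁0 ht₁lt htT
  simp only [hψ] at hψle
  linarith
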